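/- For integers w, m ≥ 1 with wm ≥ 2, the density of w-coprime m-tuples of positive integers equals 1/ζ(wm): the number of m-tuples (x₁,…,x_m) with 1 ≤ x_j ≤ n such that no prime power k^w with k prime divides all of x₁,…,x_m, divided by n^m, tends to 1/ζ(wm) as n → ∞. -/

import Mathlib

/-! Möbius inversion over the largest `d` such that `d ^ w` divides every coordinate gives the
exact count `∑_{d ≤ n} μ(d) ⌊n / d ^ w⌋ ^ m`. After division by `n ^ m` the `d`-th term tends to
`μ(d) / d ^ (w m)` and is bounded by `d ^ (-w m)`, which is summable because `w m ≥ 2`, so by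
dominated convergence the density is `∑ μ(d) / d ^ (w m) = 1 / ζ(w m)`. -/

open Filter Finset ArithmeticFunction
open scoped Classical
open scoped ArithmeticFunction.Moebius Topology

theorem sum_divisors_moebius_eq_ite (r : ℕ) :
    ∑ d ∈ r.divisors, (μ d : ℤ) = if r = 1 then 1 else 0 := by
  rw [← coe_mul_zeta_apply, moebius_mul_coe_zeta, one_apply]

theorem sum_Icc_filter_dvd_moebius {r n : ℕ} (hr : r ≠ 0) (hrn : r ≤ n) :
    ∑ d ∈ Icc 1 n with d ∣ r, (μ d : ℤ) = if r = 1 then 1 else 0 := by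
  have hdiv : {d ∈ Icc 1 n | d ∣ r} = r.divisors := by
    ext d
    simp only [mem_filter, mem_Icc, Nat.mem_divisors, and_iff_left hr]
    refine ⟨And.right, fun hd => ⟨⟨Nat.pos_of_dvd_of_pos hd (by omega), ?_⟩, hd⟩⟩
    exact (Nat.le_of_dvd (by omega) hd).trans hrn
  rw [hdiv, sum_divisors_moebius_eq_ite]

section FloorRootGcd

variable {ι : Type*} [Fintype ι]

theorem forall_pow_dvd_iff_dvd_floorRoot_gcd {w d : ℕ} {f : ι → ℕ} :
    (∀ j, d ^ w ∣ f j) ↔ d ∣ Nat.floorRoot w (univ.gcd f) := by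
  simp [← Nat.pow_dvd_iff_dvd_floorRoot, Finset.dvd_gcd_iff]

theorem floorRoot_gcd_eq_one_iff {w : ℕ} {f : ι → ℕ} :
    Nat.floorRoot w (univ.gcd f) = 1 ↔ ¬ ∃ p : ℕ, p.Prime ∧ ∀ j, p ^ w ∣ f j := by
  simp only [Nat.eq_one_iff_not_exists_prime_dvd, ← forall_pow_dvd_iff_dvd_floorRoot_gcd,
    not_exists, not_and]

theorem floorRoot_gcd_le {w : ℕ} (hw : w ≠ 0) {f : ι → ℕ} (j : ι) (hj : f j ≠ 0) :
    Nat.floorRoot w (univ.gcd f) ≤ f j :=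
  Nat.le_of_dvd (Nat.pos_of_ne_zero hj) <|
    (dvd_pow_self _ hw).trans <| Nat.floorRoot_pow_dvd.trans <| gcd_dvd (mem_univ j)

theorem floorRoot_gcd_ne_zero {w : ℕ} (hw : w ≠ 0) {f : ι → ℕ} (j : ι) (hj : f j ≠ 0) :
    Nat.floorRoot w (univ.gcd f) ≠ 0 :=
  Nat.floorRoot_ne_zero.2 ⟨hw, fun h => hj (gcd_eq_zero_iff.1 h j (mem_univ j))⟩

theorem ite_not_exists_prime_pow_dvd_eq_sum_moebius [Nonempty ι] {w n : ℕ} (hw : w ≠ 0)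
    {f : ι → ℕ} (hf : ∀ j, f j ∈ Icc 1 n) :
    (if ¬ ∃ p : ℕ, p.Prime ∧ ∀ j, p ^ w ∣ f j then 1 else 0 : ℤ) =
      ∑ d ∈ Icc 1 n with ∀ j, d ^ w ∣ f j, (μ d : ℤ) := by
  obtain ⟨j⟩ := ‹Nonempty ι›
  have hj : f j ≠ 0 := by have := mem_Icc.1 (hf j); omega
  simp only [← floorRoot_gcd_eq_one_iff]
  simp only [forall_pow_dvd_iff_dvd_floorRoot_gcd]
  exact (sum_Icc_filter_dvd_moebius (floorRoot_gcd_ne_zero hw j hj)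
    ((floorRoot_gcd_le hw j hj).trans (mem_Icc.1 (hf j)).2)).symm

end FloorRootGcd

theorem card_piFinset_Icc_filter_forall_dvd {ι : Type*} [Fintype ι] [DecidableEq ι]
    (n q : ℕ) :
    #{f ∈ Fintype.piFinset fun _ : ι => Icc 1 n | ∀ j, q ∣ f j} = (n / q) ^ Fintype.card ι := by
  have hbox : {f ∈ Fintype.piFinset fun _ : ι => Icc 1 n | ∀ j, q ∣ f j} =
      Fintype.piFinset fun _ => {x ∈ Ioc 0 n | q ∣ x} := by
    ext f
    simp only [mem_filter, Fintype.mem_piFinset, ← forall_and]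
    rfl
  rw [hbox, Fintype.card_piFinset, prod_const, card_univ, Nat.Ioc_filter_dvd_card_eq_div]

theorem card_filter_not_exists_prime_pow_dvd {ι : Type*} [Fintype ι] [DecidableEq ι]
    [Nonempty ι] {w : ℕ} (hw : w ≠ 0) (n : ℕ) :
    (#{f ∈ Fintype.piFinset fun _ : ι => Icc 1 n |
        ¬ ∃ p : ℕ, p.Prime ∧ ∀ j, p ^ w ∣ f j} : ℤ) =
      ∑ d ∈ Icc 1 n, μ d * (n / d ^ w : ℕ) ^ Fintype.card ι := by
  calc (#{f ∈ Fintype.piFinset fun _ : ι => Icc 1 n |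
          ¬ ∃ p : ℕ, p.Prime ∧ ∀ j, p ^ w ∣ f j} : ℤ)
      = ∑ f ∈ Fintype.piFinset fun _ : ι => Icc 1 n,
          ∑ d ∈ Icc 1 n with ∀ j, d ^ w ∣ f j, (μ d : ℤ) := by
        rw [card_filter, Nat.cast_sum]
        refine sum_congr rfl fun f hf => ?_
        rw [← ite_not_exists_prime_pow_dvd_eq_sum_moebius hw (Fintype.mem_piFinset.1 hf)]
        split_ifs <;> rfl
    _ = ∑ d ∈ Icc 1 n, ∑ f ∈ Fintype.piFinset fun _ : ι => Icc 1 n with ∀ j, d ^ w ∣ f j,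
          (μ d : ℤ) := by
        simp only [sum_filter]
        exact sum_comm
    _ = ∑ d ∈ Icc 1 n, μ d * (n / d ^ w : ℕ) ^ Fintype.card ι := by
        simp only [sum_const, card_piFinset_Icc_filter_forall_dvd, nsmul_eq_mul, mul_comm]
        push_cast
        rfl

theorem natCast_div_div_self_le (n q : ℕ) : ((n / q : ℕ) : ℝ) / n ≤ (q : ℝ)⁻¹ := by
  rcases eq_or_ne n 0 with rfl | hn
  · simp
  calc ((n / q : ℕ) : ℝ) / n ≤ (n / q : ℝ) / n := by gcongr; exact Nat.cast_div_le
    _ = (q : ℝ)⁻¹ := by field_simp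

theorem tendsto_natCast_div_div_self {q : ℕ} (hq : q ≠ 0) :
    Tendsto (fun n : ℕ => ((n / q : ℕ) : ℝ) / n) atTop (𝓝 (q : ℝ)⁻¹) := by
  have hq' : (0 : ℝ) < q := by positivity
  have hfloor : Tendsto (fun n : ℕ => (⌊(n / q : ℝ)⌋₊ : ℝ) / (n / q : ℝ) * (q : ℝ)⁻¹) atTop
      (𝓝 (q : ℝ)⁻¹) := by
    simpa using (tendsto_nat_floor_div_atTop.comp
      (tendsto_natCast_atTop_atTop.atTop_div_const hq')).mul_const (q : ℝ)⁻¹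
  refine hfloor.congr fun n => ?_
  rw [Nat.floor_div_eq_div]
  field_simp

theorem tsum_moebius_div_pow {k : ℕ} (hk : 2 ≤ k) :
    ∑' d : ℕ, (μ d : ℂ) / (d : ℂ) ^ k = (riemannZeta k)⁻¹ := by
  have hs : 1 < (k : ℂ).re := by simp only [Complex.natCast_re]; exact_mod_cast hk
  have hinv := LSeries_zeta_mul_Lseries_moebius hs
  rw [LSeries_zeta_eq_riemannZeta hs] at hinv
  rw [inv_eq_of_mul_eq_one_right hinv, LSeries]
  refine tsum_congr fun d => ?_
  rcases eq_or_ne d 0 with rfl | hd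
  · simp
  · rw [LSeries.term_of_ne_zero hd, Complex.cpow_natCast]

theorem tendsto_tsum_moebius_mul_div_pow {w m : ℕ} (hwm : 2 ≤ w * m) :
    Tendsto (fun n : ℕ => ∑' d : ℕ, (μ d : ℂ) * (((n / d ^ w : ℕ) : ℂ) / n) ^ m) atTop
      (𝓝 (riemannZeta (w * m))⁻¹) := by
  have hbound : ∀ n d : ℕ,
      ‖(μ d : ℂ) * (((n / d ^ w : ℕ) : ℂ) / n) ^ m‖ ≤ 1 / (d : ℝ) ^ (w * m) := by
    intro n d
    have hμ : ‖(μ d : ℂ)‖ ≤ 1 := by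
      rw [Complex.norm_intCast]; exact_mod_cast abs_moebius_le_one
    have hquot : ‖((n / d ^ w : ℕ) : ℂ) / n‖ ≤ ((d : ℝ) ^ w)⁻¹ := by
      simpa [norm_div] using natCast_div_div_self_le n (d ^ w)
    calc ‖(μ d : ℂ) * (((n / d ^ w : ℕ) : ℂ) / n) ^ m‖ ≤ 1 * (((d : ℝ) ^ w)⁻¹) ^ m := by
          rw [norm_mul, norm_pow]; gcongr
      _ = 1 / (d : ℝ) ^ (w * m) := by rw [one_mul, inv_pow, ← pow_mul, one_div]
  have hlim : ∀ d : ℕ, Tendsto (fun n : ℕ => (μ d : ℂ) * (((n / d ^ w : ℕ) : ℂ) / n) ^ m) atTop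
      (𝓝 ((μ d : ℂ) / (d : ℂ) ^ (w * m))) := by
    intro d
    rcases eq_or_ne d 0 with rfl | hd
    · simp
    have hquot := (tendsto_ofReal_iff.2 (tendsto_natCast_div_div_self (pow_ne_zero w hd)))
    push_cast at hquot
    simpa [div_eq_mul_inv, inv_pow, ← pow_mul] using (hquot.pow m).const_mul (μ d : ℂ)
  have hsum := tendsto_tsum_of_dominated_convergence (Real.summable_one_div_nat_pow.2 hwm) hlim
    (Eventually.of_forall hbound)
  rwa [tsum_moebius_div_pow hwm, Nat.cast_mul] at hsum

theorem tsum_moebius_mul_div_pow_eq {w m : ℕ} (hw : w ≠ 0) (hm : m ≠ 0) (n : ℕ) :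
    ∑' d : ℕ, (μ d : ℂ) * (((n / d ^ w : ℕ) : ℂ) / n) ^ m =
      ((∑ d ∈ Icc 1 n, μ d * (n / d ^ w : ℕ) ^ m : ℤ) : ℂ) / (n : ℂ) ^ m := by
  have hvanish : ∀ d ∉ Icc 1 n, (μ d : ℂ) * (((n / d ^ w : ℕ) : ℂ) / n) ^ m = 0 := by
    intro d hd
    rcases eq_or_ne d 0 with rfl | hd0
    · simp
    have hnd : n < d := by
      simp only [mem_Icc, not_and, not_le] at hd
      exact hd (Nat.pos_of_ne_zero hd0)
    have hn : n / d ^ w = 0 := Nat.div_eq_of_lt (hnd.trans_le (Nat.le_self_pow hw d))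
    simp [hn, hm]
  rw [tsum_eq_sum hvanish, Int.cast_sum, sum_div]
  simp only [Int.cast_mul, Int.cast_pow, Int.cast_natCast]
  exact sum_congr rfl fun d _ => by rw [div_pow, mul_div_assoc]

theorem benkoski_w_coprime_density_general (w m : ℕ)
    (hwm : 2 ≤ w * m) :
    Tendsto (fun n : ℕ =>
        (((Fintype.piFinset fun _ : Fin m => Finset.Icc 1 n).filter
            fun f : Fin m → ℕ =>
              ¬ ∃ p : ℕ, p.Prime ∧ ∀ j : Fin m, p ^ w ∣ f j).card : ℂ) / (n : ℂ) ^ m)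
      atTop (nhds (riemannZeta (w * m))⁻¹) := by
  have hw : w ≠ 0 := by rintro rfl; omega
  have hm : m ≠ 0 := by rintro rfl; omega
  have : Nonempty (Fin m) := Fin.pos_iff_nonempty.1 (Nat.pos_of_ne_zero hm)
  refine (tendsto_tsum_moebius_mul_div_pow hwm).congr fun n => ?_
  have hcount := card_filter_not_exists_prime_pow_dvd (ι := Fin m) hw n
  rw [Fintype.card_fin] at hcount
  rw [tsum_moebius_mul_div_pow_eq hw hm, ← hcount, Int.cast_natCast]

/-- Benkoski (1976): for `w, m ≥ 1` with `wm ≥ 2`, the density of `w`-coprime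
`m`-tuples of positive integers (no `p^w` with `p` prime divides all entries)
is `1 / ζ(wm)`. -/
theorem benkoski_w_coprime_density (w m : ℕ) (hw : 1 ≤ w) (hm : 1 ≤ m)
    (hwm : 2 ≤ w * m) :
    Tendsto (fun n : ℕ =>
        (((Fintype.piFinset fun _ : Fin m => Finset.Icc 1 n).filter
            fun f : Fin m → ℕ =>
              ¬ ∃ p : ℕ, p.Prime ∧ ∀ j : Fin m, p ^ w ∣ f j).card : ℂ) / (n : ℂ) ^ m)
      atTop (nhds (riemannZeta (w * m))⁻¹) :=
  benkoski_w_coprime_density_general w m hwm
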